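/- With the combinatorial setup below, for every γ ∈ Γ and every positive integer t one has n_t(γ) ≤ 1 + Σ_{u=1}^{t−1} n_u(γ); consequently n_t(γ) ≤ 2^{t−1} for all t ≥ 1. -/

import Mathlib

namespace PaperPurity

variable {r : ℕ}

/-- `J₊ = {(i,j) : j ≤ c < i}` (translated to 0-based indexing on `Fin r`). -/
def Jp (c : ℕ) : Set (Fin r × Fin r) := {q | q.2.val < c ∧ c ≤ q.1.val}

/-- `J₀ = {(i,j) : i,j ≤ c or i,j > c}` (0-based). -/
def Jz (c : ℕ) : Set (Fin r × Fin r) :=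
  {q | (q.1.val < c ∧ q.2.val < c) ∨ (c ≤ q.1.val ∧ c ≤ q.2.val)}

/-- `J₋ = {(i,j) : i ≤ c < j}` (0-based). -/
def Jm (c : ℕ) : Set (Fin r × Fin r) := {q | q.1.val < c ∧ c ≤ q.2.val}

/-- Apply `π^s` to both entries of a pair. -/
def iter (π : Equiv.Perm (Fin r)) (s : ℕ) (q : Fin r × Fin r) : Fin r × Fin r :=
  ((π ^ s) q.1, (π ^ s) q.2)

/-- The π-order `ν(i,j)`: the smallest positive `ν` with `(π^ν i, π^ν j) ∈ J₊ ∪ J₋`.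
On `J₀,₀` this `sInf` also computes the extended π-order `ν(i,j) - s`. -/
noncomputable def nu (π : Equiv.Perm (Fin r)) (c : ℕ) (q : Fin r × Fin r) : ℕ :=
  sInf {ν : ℕ | 0 < ν ∧ iter π ν q ∈ Jp c ∪ Jm c}

/-- `J₋,₁`. -/
def Jm1 (π : Equiv.Perm (Fin r)) (c : ℕ) : Set (Fin r × Fin r) :=
  {q | q ∈ Jm c ∧ iter π (nu π c q) q ∈ Jp c}

/-- `J₊,₁`. -/
def Jp1 (π : Equiv.Perm (Fin r)) (c : ℕ) : Set (Fin r × Fin r) :=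
  {q' | ∃ q ∈ Jm1 π c, q' = iter π (nu π c q) q}

/-- `J₊,₂ = J₊ \ J₊,₁`. -/
def Jp2 (π : Equiv.Perm (Fin r)) (c : ℕ) : Set (Fin r × Fin r) := Jp c \ Jp1 π c

/-- `J₀,₀`. -/
def Jz0 (π : Equiv.Perm (Fin r)) (c : ℕ) : Set (Fin r × Fin r) :=
  {q' | ∃ q ∈ Jm1 π c, ∃ s : ℕ, 1 ≤ s ∧ s ≤ nu π c q - 1 ∧ q' = iter π s q}

/-- The π-level `η`. -/
noncomputable def eta (π : Equiv.Perm (Fin r)) (c : ℕ) (q' : Fin r × Fin r) : ℕ :=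
  sInf {s : ℕ | ∃ q ∈ Jm1 π c, s ≤ nu π c q ∧ q' = iter π s q}

/-- Membership in `Γ` for the tuple `(γ 1, …, γ s)`. -/
def inGamma (π : Equiv.Perm (Fin r)) (c s : ℕ) (γ : ℕ → Fin r) : Prop :=
  2 ≤ s ∧ (∀ ℓ : ℕ, 1 ≤ ℓ → ℓ ≤ s - 2 → (γ ℓ, γ (ℓ + 1)) ∈ Jz0 π c) ∧
    (γ (s - 1), γ s) ∈ Jp2 π c

/-- Membership in `Δ` for the tuple `(γ 1, …, γ s)`. -/
def inDelta (π : Equiv.Perm (Fin r)) (c s : ℕ) (γ : ℕ → Fin r) : Prop :=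
  3 ≤ s ∧ inGamma π c (s - 1) γ ∧ (γ (s - 1), γ s) ∈ Jz0 π c

/-- `n_t(γ)`. -/
noncomputable def nCount (π : Equiv.Perm (Fin r)) (c s : ℕ) (γ : ℕ → Fin r) (t : ℕ) : ℕ :=
  Set.ncard {ℓ : ℕ | 1 ≤ ℓ ∧ ℓ ≤ s - 1 ∧ (γ ℓ, γ (ℓ + 1)) ∈ Jz0 π c ∧
    nu π c (γ ℓ, γ (ℓ + 1)) = t}

/-- `κ(γ) = Σ_{t ≥ 1} n_t(γ) p^{-t} ∈ ℚ`. -/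
noncomputable def kappa (p : ℕ) (π : Equiv.Perm (Fin r)) (c s : ℕ) (γ : ℕ → Fin r) : ℚ :=
  ∑ᶠ t : ℕ, if 1 ≤ t then (nCount π c s γ t : ℚ) / (p : ℚ) ^ t else 0

/-- Membership in `Γ₁`. -/
def inGamma1 (π : Equiv.Perm (Fin r)) (c s : ℕ) (γ : ℕ → Fin r) : Prop :=
  inGamma π c s γ ∧ (γ 1, γ s) ∈ Jp1 π c ∧ (γ 2, γ s) ∉ Jp1 π c

/-- Membership in `Δ₁`. -/
def inDelta1 (π : Equiv.Perm (Fin r)) (c s : ℕ) (γ : ℕ → Fin r) : Prop :=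
  inDelta π c s γ ∧ (γ 1, γ s) ∈ Jp1 π c ∧ (γ 2, γ s) ∉ Jp1 π c

/-- `κ(π) = max {κ(γ) : γ ∈ Γ₁ ∪ Δ₁}` (and `0` if `Γ₁ ∪ Δ₁ = ∅`); realized as a
supremum in `ℝ` of the (finite) set of values together with `0`. -/
noncomputable def kappaPerm (p : ℕ) (π : Equiv.Perm (Fin r)) (c : ℕ) : ℝ :=
  sSup (insert (0 : ℝ) {x : ℝ | ∃ (s : ℕ) (γ : ℕ → Fin r),
    (inGamma1 π c s γ ∨ inDelta1 π c s γ) ∧ x = ((kappa p π c s γ : ℚ) : ℝ)})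

/-- The `k`-span of the matrix units `E_{i,j}`, `(i,j) ∈ S`. -/
def spanUnits (k : Type*) [Field k] {r : ℕ} (S : Set (Fin r × Fin r)) :
    Submodule k (Matrix (Fin r) (Fin r) k) :=
  Submodule.span k ((fun q : Fin r × Fin r => Matrix.single q.1 q.2 (1 : k)) '' S)



section Aux

lemma iter_iter (π : Equiv.Perm (Fin r)) (a b : ℕ) (q : Fin r × Fin r) :
    iter π a (iter π b q) = iter π (a + b) q := by
  simp [iter, pow_add, Equiv.Perm.mul_apply]

lemma mem_Jz_of_not (c : ℕ) (q : Fin r × Fin r) (h : q ∉ Jp c ∪ Jm c) :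
    ((q.1 : ℕ) < c ↔ (q.2 : ℕ) < c) := by
  simp only [Jp, Jm, Set.mem_union, Set.mem_setOf_eq, not_or] at h
  omega

lemma Jz0_spec (π : Equiv.Perm (Fin r)) (c : ℕ) (q : Fin r × Fin r) (hq : q ∈ Jz0 π c) :
    0 < nu π c q ∧ iter π (nu π c q) q ∈ Jp c ∧
      ∀ u, 0 < u → u < nu π c q →
        (((iter π u q).1 : ℕ) < c ↔ ((iter π u q).2 : ℕ) < c) := by
  obtain ⟨q₀, hq₀, s, hs1, hs2, rfl⟩ := hq
  obtain ⟨hm, hp⟩ := hq₀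
  set N := nu π c q₀ with hN
  have hN0 : 0 < N := by
    by_contra h
    push_neg at h
    have h0 : N = 0 := by omega
    rw [h0] at hp
    simp only [iter, pow_zero, Equiv.Perm.coe_one, id_eq] at hp
    simp only [Jp, Jm, Set.mem_setOf_eq] at hp hm
    omega
  have hmin : ∀ u, 0 < u → u < N →
      (((iter π u q₀).1 : ℕ) < c ↔ ((iter π u q₀).2 : ℕ) < c) := by
    intro u hu huN
    have hnm : u ∉ {ν : ℕ | 0 < ν ∧ iter π ν q₀ ∈ Jp c ∪ Jm c} :=
      Nat.notMem_of_lt_sInf huN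
    exact mem_Jz_of_not c _ (fun hmem => hnm ⟨hu, hmem⟩)
  have hmem : N - s ∈ {ν : ℕ | 0 < ν ∧ iter π ν (iter π s q₀) ∈ Jp c ∪ Jm c} := by
    constructor
    · omega
    · rw [iter_iter, show N - s + s = N by omega]
      exact Or.inl hp
  have hnuq : nu π c (iter π s q₀) = N - s := by
    refine le_antisymm (Nat.sInf_le hmem) (le_csInf ⟨_, hmem⟩ ?_)
    intro ν hν
    by_contra hlt
    push_neg at hlt
    obtain ⟨hν0, hνmem⟩ := hν
    rw [iter_iter] at hνmem
    have hiff := hmin (ν + s) (by omega) (by omega)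
    rcases hνmem with h | h <;> simp only [Jp, Jm, Set.mem_setOf_eq] at h <;> omega
  rw [hnuq]
  refine ⟨by omega, ?_, ?_⟩
  · rw [iter_iter, show N - s + s = N by omega]; exact hp
  · intro u hu huN
    rw [iter_iter]
    exact hmin (u + s) (by omega) (by omega)

lemma crossing (π : Equiv.Perm (Fin r)) (c s : ℕ) (γ : ℕ → Fin r)
    (hγ : inGamma π c s γ) (t ℓ m : ℕ)
    (hℓ1 : 1 ≤ ℓ) (hms : m ≤ s - 1) (hℓm : ℓ < m)
    (hℓJ : (γ ℓ, γ (ℓ + 1)) ∈ Jz0 π c) (hℓν : nu π c (γ ℓ, γ (ℓ + 1)) = t)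
    (hmJ : (γ m, γ (m + 1)) ∈ Jz0 π c) (hmν : nu π c (γ m, γ (m + 1)) = t)
    (hbet : ∀ k, ℓ < k → k < m → t < nu π c (γ k, γ (k + 1))) : False := by
  obtain ⟨hs2, hmid, -⟩ := hγ
  obtain ⟨hℓpos, hℓJp, -⟩ := Jz0_spec π c _ hℓJ
  obtain ⟨-, hmJp, -⟩ := Jz0_spec π c _ hmJ
  rw [hℓν] at hℓpos hℓJp
  rw [hmν] at hmJp
  simp only [Jp, Set.mem_setOf_eq, iter] at hℓJp hmJp
  have hbase : ((π ^ t) (γ (ℓ + 1)) : Fin r).val < c := hℓJp.1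
  have claim : ∀ k, ℓ + 1 ≤ k → k ≤ m → ((π ^ t) (γ k) : Fin r).val < c := by
    intro k hk
    induction k, hk using Nat.le_induction with
    | base => intro _; exact hbase
    | succ k hk ih =>
      intro hkm
      have ihk := ih (by omega)
      have hkJ : (γ k, γ (k + 1)) ∈ Jz0 π c := hmid k (by omega) (by omega)
      obtain ⟨-, -, hmin⟩ := Jz0_spec π c _ hkJ
      have hiff := hmin t (by omega) (hbet k (by omega) (by omega))
      simp only [iter] at hiff
      omega
  have hlast := claim m (by omega) le_rfl
  omega

lemma count_aux (A B : Finset ℕ)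
    (H : ∀ ℓ m, ℓ ∈ A → m ∈ A → ℓ < m → (∀ k ∈ A, ¬(ℓ < k ∧ k < m)) →
      ∃ k ∈ B, ℓ < k ∧ k < m) :
    A.card ≤ B.card + 1 := by
  classical
  have K : ∀ n ℓ m, ℓ ∈ A → m ∈ A → ℓ < m → m - ℓ ≤ n →
      (A ∩ Finset.Ioo ℓ m).card + 1 ≤ (B ∩ Finset.Ioo ℓ m).card := by
    intro n
    induction n with
    | zero => intro ℓ m _ _ h1 h2; omega
    | succ n ih =>
      intro ℓ m hℓ hm hlt hle
      by_cases hA : (A ∩ Finset.Ioo ℓ m).Nonempty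
      · obtain ⟨k, hk⟩ := hA
        rw [Finset.mem_inter, Finset.mem_Ioo] at hk
        obtain ⟨hkA, hk1, hk2⟩ := hk
        have h1 := ih ℓ k hℓ hkA hk1 (by omega)
        have h2 := ih k m hkA hm hk2 (by omega)
        have hsubA : A ∩ Finset.Ioo ℓ m ⊆
            insert k ((A ∩ Finset.Ioo ℓ k) ∪ (A ∩ Finset.Ioo k m)) := by
          intro a ha
          rw [Finset.mem_inter, Finset.mem_Ioo] at ha
          simp only [Finset.mem_insert, Finset.mem_union, Finset.mem_inter, Finset.mem_Ioo]
          rcases Nat.lt_trichotomy a k with h | h | h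
          · exact Or.inr (Or.inl ⟨ha.1, ha.2.1, h⟩)
          · exact Or.inl h
          · exact Or.inr (Or.inr ⟨ha.1, h, ha.2.2⟩)
        have hsubB : (B ∩ Finset.Ioo ℓ k) ∪ (B ∩ Finset.Ioo k m) ⊆ B ∩ Finset.Ioo ℓ m := by
          intro a ha
          simp only [Finset.mem_union, Finset.mem_inter, Finset.mem_Ioo] at ha ⊢
          rcases ha with h | h
          · exact ⟨h.1, h.2.1, by omega⟩
          · exact ⟨h.1, by omega, h.2.2⟩
        have hdB : Disjoint (B ∩ Finset.Ioo ℓ k) (B ∩ Finset.Ioo k m) := by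
          rw [Finset.disjoint_left]
          intro a ha ha'
          simp only [Finset.mem_inter, Finset.mem_Ioo] at ha ha'
          omega
        have e1 : (A ∩ Finset.Ioo ℓ m).card ≤
            (A ∩ Finset.Ioo ℓ k).card + (A ∩ Finset.Ioo k m).card + 1 :=
          (Finset.card_le_card hsubA).trans ((Finset.card_insert_le _ _).trans
            (Nat.add_le_add_right (Finset.card_union_le _ _) 1))
        have e2 : (B ∩ Finset.Ioo ℓ k).card + (B ∩ Finset.Ioo k m).card ≤
            (B ∩ Finset.Ioo ℓ m).card := by
          rw [← Finset.card_union_of_disjoint hdB]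
          exact Finset.card_le_card hsubB
        omega
      · have hcard0 : (A ∩ Finset.Ioo ℓ m).card = 0 := by
          rw [Finset.card_eq_zero]
          exact Finset.not_nonempty_iff_eq_empty.mp hA
        obtain ⟨k, hkB, hk1, hk2⟩ := H ℓ m hℓ hm hlt
          (fun k hkA hcon => hA ⟨k, Finset.mem_inter.mpr
            ⟨hkA, Finset.mem_Ioo.mpr ⟨hcon.1, hcon.2⟩⟩⟩)
        have hpos : 0 < (B ∩ Finset.Ioo ℓ m).card :=
          Finset.card_pos.mpr ⟨k, Finset.mem_inter.mpr ⟨hkB, Finset.mem_Ioo.mpr ⟨hk1, hk2⟩⟩⟩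
        omega
  rcases A.eq_empty_or_nonempty with h | h
  · simp [h]
  · set ℓ₀ := A.min' h with hℓ₀
    set m₀ := A.max' h with hm₀
    rcases Nat.lt_or_ge ℓ₀ m₀ with hlt | hge
    · have hK := K (m₀ - ℓ₀) ℓ₀ m₀ (A.min'_mem h) (A.max'_mem h) hlt le_rfl
      have hsub : A ⊆ insert ℓ₀ (insert m₀ (A ∩ Finset.Ioo ℓ₀ m₀)) := by
        intro a ha
        simp only [Finset.mem_insert, Finset.mem_inter, Finset.mem_Ioo]
        have h1 := A.min'_le a ha
        have h2 := A.le_max' a ha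
        by_cases e1 : a = ℓ₀
        · exact Or.inl e1
        · by_cases e2 : a = m₀
          · exact Or.inr (Or.inl e2)
          · exact Or.inr (Or.inr ⟨ha, by omega, by omega⟩)
      have c1 := Finset.card_le_card hsub
      have c2 := Finset.card_insert_le m₀ (A ∩ Finset.Ioo ℓ₀ m₀)
      have c3 := Finset.card_insert_le ℓ₀ (insert m₀ (A ∩ Finset.Ioo ℓ₀ m₀))
      have hB := Finset.card_le_card (Finset.inter_subset_left (s₁ := B)
        (s₂ := Finset.Ioo ℓ₀ m₀))
      omega
    · have hsub : A ⊆ {ℓ₀} := by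
        intro a ha
        have h1 := A.min'_le a ha
        have h2 := A.le_max' a ha
        simp only [Finset.mem_singleton]
        omega
      have hc := Finset.card_le_card hsub
      simp only [Finset.card_singleton] at hc
      omega

lemma part1 (π : Equiv.Perm (Fin r)) (c s : ℕ) (γ : ℕ → Fin r)
    (hγ : inGamma π c s γ) (t : ℕ) (ht : 1 ≤ t) :
    nCount π c s γ t ≤ 1 + ∑ u ∈ Finset.Icc 1 (t - 1), nCount π c s γ u := by
  classical
  set Af : ℕ → Finset ℕ := fun u => (Finset.Icc 1 (s - 1)).filter
    (fun ℓ => (γ ℓ, γ (ℓ + 1)) ∈ Jz0 π c ∧ nu π c (γ ℓ, γ (ℓ + 1)) = u) with hAf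
  have hcount : ∀ u, nCount π c s γ u = (Af u).card := by
    intro u
    unfold nCount
    rw [← Set.ncard_coe_finset]
    congr 1
    ext ℓ
    simp only [hAf, Set.mem_setOf_eq, Finset.coe_filter, Finset.mem_Icc]
    tauto
  set B : Finset ℕ := (Finset.Icc 1 (s - 1)).filter
    (fun ℓ => (γ ℓ, γ (ℓ + 1)) ∈ Jz0 π c ∧ nu π c (γ ℓ, γ (ℓ + 1)) < t) with hB
  have hmain : (Af t).card ≤ B.card + 1 := by
    apply count_aux
    intro ℓ m hℓ hm hlt hno
    by_contra hcon
    simp only [hAf, Finset.mem_filter, Finset.mem_Icc] at hℓ hm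
    refine crossing π c s γ hγ t ℓ m hℓ.1.1 hm.1.2 hlt hℓ.2.1 hℓ.2.2 hm.2.1 hm.2.2 ?_
    intro k hk1 hk2
    have hkJ : (γ k, γ (k + 1)) ∈ Jz0 π c := hγ.2.1 k (by omega) (by omega)
    have hkIcc : k ∈ Finset.Icc 1 (s - 1) := Finset.mem_Icc.mpr (by omega)
    have h1 : nu π c (γ k, γ (k + 1)) ≠ t := by
      intro he
      exact hno k (by rw [hAf]; exact Finset.mem_filter.mpr ⟨hkIcc, hkJ, he⟩) ⟨hk1, hk2⟩
    have h2 : ¬ nu π c (γ k, γ (k + 1)) < t := by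
      intro he
      exact hcon ⟨k, by rw [hB]; exact Finset.mem_filter.mpr ⟨hkIcc, hkJ, he⟩, hk1, hk2⟩
    omega
  have hBsub : B ⊆ (Finset.Icc 1 (t - 1)).biUnion Af := by
    intro ℓ hℓ
    rw [hB, Finset.mem_filter] at hℓ
    obtain ⟨hIcc, hJ, hlt⟩ := hℓ
    have hpos := (Jz0_spec π c _ hJ).1
    exact Finset.mem_biUnion.mpr ⟨nu π c (γ ℓ, γ (ℓ + 1)), Finset.mem_Icc.mpr (by omega),
      by rw [hAf]; exact Finset.mem_filter.mpr ⟨hIcc, hJ, rfl⟩⟩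
  have hBcard : B.card ≤ ∑ u ∈ Finset.Icc 1 (t - 1), (Af u).card :=
    (Finset.card_le_card hBsub).trans Finset.card_biUnion_le
  have hsum : ∑ u ∈ Finset.Icc 1 (t - 1), nCount π c s γ u =
      ∑ u ∈ Finset.Icc 1 (t - 1), (Af u).card :=
    Finset.sum_congr rfl fun u _ => hcount u
  rw [hcount t, hsum]
  omega

lemma geom_helper (m : ℕ) : ∑ u ∈ Finset.Icc 1 m, 2 ^ (u - 1) = 2 ^ m - 1 := by
  induction m with
  | zero => simp
  | succ m ih =>
    rw [Finset.sum_Icc_succ_top (by omega), ih]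
    have h1 : 0 < 2 ^ m := Nat.two_pow_pos m
    have h2 : 2 ^ (m + 1) = 2 * 2 ^ m := by rw [pow_succ]; ring
    simp only [Nat.add_sub_cancel]
    omega

end Aux

theorem statement_6 (c d : ℕ) (hc : 0 < c) (hd : 0 < d)
    (π : Equiv.Perm (Fin (c + d))) (s : ℕ) (γ : ℕ → Fin (c + d))
    (hγ : inGamma π c s γ) (t : ℕ) (ht : 1 ≤ t) :
    nCount π c s γ t ≤ 1 + ∑ u ∈ Finset.Icc 1 (t - 1), nCount π c s γ u ∧
      nCount π c s γ t ≤ 2 ^ (t - 1) := by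
  constructor
  · exact part1 π c s γ hγ t ht
  · have key : ∀ t, 1 ≤ t → nCount π c s γ t ≤ 2 ^ (t - 1) := by
      intro t
      induction t using Nat.strong_induction_on with
      | _ t ih =>
        intro ht
        have h1 := part1 π c s γ hγ t ht
        have h2 : ∑ u ∈ Finset.Icc 1 (t - 1), nCount π c s γ u ≤
            ∑ u ∈ Finset.Icc 1 (t - 1), 2 ^ (u - 1) := by
          apply Finset.sum_le_sum
          intro u hu
          rw [Finset.mem_Icc] at hu
          exact ih u (by omega) hu.1
        have h3 := geom_helper (t - 1)
        have h4 : 0 < 2 ^ (t - 1) := Nat.two_pow_pos (t - 1)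
        omega
    exact key t ht


end PaperPurity
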